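/- Let a, b, c be integers with Δ = b² - 4ac not a perfect square and Δ > 0, let Q = ((2a, b), (b, 2c)) and A = ((-b, -2c), (2a, b)). For any integer solution (t, u) of t² - Δ·u² = 4, the matrix g = (1/2)(t·I₂ + u·A) has integer entries, determinant 1, and satisfies gᵀ·Q·g = Q. Consequently, the isometry group of the even lattice with Gram matrix Q is infinite. -/

import Mathlib

/-!
Write `Δ = b² - 4ac`. For `t = 2k + bu` the integral matrix `g = !![k, -cu; au, k + bu]` equals
`(t • 1 + u • A) / 2` and satisfies `gᵀ Q g = (det g) • Q` with `4 det g = t² - Δu²`; so every solution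
of `t² - Δu² = 4` (which forces `t ≡ bu mod 2`) gives an isometry of determinant `1`. Since `Δ > 0` is not
a square, Pell's equation `x² - Δy² = 1` has infinitely many solutions, and `(t, u) = (2x, 2y)` gives
pairwise distinct isometries because `a ≠ 0` (otherwise `Δ = b²`) and the lower-left entry is `a u`.
-/

open Matrix

namespace BinaryForm

def automorph (a b c k u : ℤ) : Matrix (Fin 2) (Fin 2) ℤ :=
  !![k, -(c * u); a * u, k + b * u]

variable {a b c : ℤ}

theorem det_automorph (k u : ℤ) : (automorph a b c k u).det = k ^ 2 + b * k * u + a * c * u ^ 2 := by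
  rw [automorph, det_fin_two_of]; ring

theorem two_smul_automorph (k u : ℤ) :
    (2 : ℤ) • automorph a b c k u =
      (2 * k + b * u) • (1 : Matrix (Fin 2) (Fin 2) ℤ) + u • !![-b, -2 * c; 2 * a, b] := by
  rw [automorph, one_fin_two]
  ext i j; fin_cases i <;> fin_cases j <;> simp <;> ring

theorem transpose_automorph_mul_mul (k u : ℤ) :
    (automorph a b c k u)ᵀ * !![2 * a, b; b, 2 * c] * automorph a b c k u =
      (automorph a b c k u).det • !![2 * a, b; b, 2 * c] := by
  have hT : (automorph a b c k u)ᵀ = !![k, a * u; -(c * u), k + b * u] := by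
    ext i j; fin_cases i <;> fin_cases j <;> rfl
  rw [hT, det_automorph, automorph, mul_fin_two, mul_fin_two, smul_of]
  ext i j; fin_cases i <;> fin_cases j <;> simp <;> ring

theorem det_automorph_eq_one {k u : ℤ} (h : (2 * k + b * u) ^ 2 - (b ^ 2 - 4 * a * c) * u ^ 2 = 4) :
    (automorph a b c k u).det = 1 := by
  rw [det_automorph]
  have h4 : 4 * (k ^ 2 + b * k * u + a * c * u ^ 2) = 4 * 1 := by linear_combination h
  exact mul_left_cancel₀ four_ne_zero h4

theorem transpose_automorph_mul_mul_eq_self {k u : ℤ}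
    (h : (2 * k + b * u) ^ 2 - (b ^ 2 - 4 * a * c) * u ^ 2 = 4) :
    (automorph a b c k u)ᵀ * !![2 * a, b; b, 2 * c] * automorph a b c k u = !![2 * a, b; b, 2 * c] := by
  rw [transpose_automorph_mul_mul, det_automorph_eq_one h, one_smul]

theorem exists_eq_two_mul_add_of_sq_sub_mul_sq_eq_four {t u : ℤ}
    (h : t ^ 2 - (b ^ 2 - 4 * a * c) * u ^ 2 = 4) : ∃ k, t = 2 * k + b * u := by
  have hsq : Even ((t - b * u) ^ 2) :=
    ⟨2 + b ^ 2 * u ^ 2 - 2 * a * c * u ^ 2 - t * b * u, by linear_combination h⟩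
  obtain ⟨k, hk⟩ := (Int.even_pow.mp hsq).1
  exact ⟨k, by linear_combination hk⟩

theorem automorph_injective_of_ne_zero (ha : a ≠ 0) {k k' u u' : ℤ}
    (h : automorph a b c k u = automorph a b c k' u') : k = k' ∧ u = u' := by
  have hk : k = k' := by simpa [automorph] using congrFun (congrFun h 0) 0
  have hu : a * u = a * u' := by simpa [automorph] using congrFun (congrFun h 1) 0
  exact ⟨hk, mul_left_cancel₀ ha hu⟩

theorem infinite_setOf_transpose_mul_mul_eq (hΔ : 0 < b ^ 2 - 4 * a * c)
    (hns : ¬ IsSquare (b ^ 2 - 4 * a * c)) :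
    {g : Matrix (Fin 2) (Fin 2) ℤ | gᵀ * !![2 * a, b; b, 2 * c] * g = !![2 * a, b; b, 2 * c]}.Infinite := by
  have ha : a ≠ 0 := by
    rintro rfl
    exact hns ⟨b, by ring⟩
  obtain ⟨ε, hε⟩ := Pell.IsFundamental.exists_of_not_isSquare hΔ hns
  let sol (n : ℤ) : Pell.Solution₁ (b ^ 2 - 4 * a * c) := ε ^ n
  refine Set.infinite_of_injective_forall_mem
    (f := fun n => automorph a b c ((sol n).x - b * (sol n).y) (2 * (sol n).y)) ?_ fun n => ?_
  · intro m n hmn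
    apply hε.y_strictMono.injective
    have := (automorph_injective_of_ne_zero ha hmn).2
    show (sol m).y = (sol n).y
    omega
  · apply transpose_automorph_mul_mul_eq_self
    linear_combination 4 * (sol n).prop

end BinaryForm

open Matrix in
theorem stmt_9 (a b c : ℤ)
    (hΔ : 0 < b ^ 2 - 4 * a * c) (hns : ¬ ∃ n : ℤ, b ^ 2 - 4 * a * c = n ^ 2)
    (Q A : Matrix (Fin 2) (Fin 2) ℤ)
    (hQ : Q = !![2 * a, b; b, 2 * c]) (hA : A = !![-b, -2 * c; 2 * a, b]) :
    (∀ t u : ℤ, t ^ 2 - (b ^ 2 - 4 * a * c) * u ^ 2 = 4 →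
      ∃ g : Matrix (Fin 2) (Fin 2) ℤ,
        (2 : ℤ) • g = t • (1 : Matrix (Fin 2) (Fin 2) ℤ) + u • A ∧
        g.det = 1 ∧ gᵀ * Q * g = Q) ∧
    {g : Matrix (Fin 2) (Fin 2) ℤ | gᵀ * Q * g = Q}.Infinite := by
  subst hQ hA
  refine ⟨fun t u ht => ?_, ?_⟩
  · obtain ⟨k, rfl⟩ := BinaryForm.exists_eq_two_mul_add_of_sq_sub_mul_sq_eq_four ht
    exact ⟨BinaryForm.automorph a b c k u, BinaryForm.two_smul_automorph k u,
      BinaryForm.det_automorph_eq_one ht, BinaryForm.transpose_automorph_mul_mul_eq_self ht⟩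
  · refine BinaryForm.infinite_setOf_transpose_mul_mul_eq hΔ fun ⟨r, hr⟩ => hns ⟨r, ?_⟩
    rw [hr, sq]
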